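/- arXiv:2309.05931 — 4 statements merged into one kernel-verified Lean document; each statement's English description precedes it below -/
import Mathlib

section
/- Let V be a vector space over a field F, let I be a finite set, and for each i ∈ I let S_i ⊆ V be a subset such that for every subset J ⊆ I the dimension of the span of the union of the S_j for j ∈ J is at least the cardinality of J. Then there exists a tuple (v_i)_{i∈I} with v_i ∈ S_i for each i whose components are linearly independent. -/
open Submodule Set Cardinal

section Rado

variable {F : Type*} {V : Type*} [Field F] [AddCommGroup V] [Module F V]

private lemma rado_rank_le (W U : Submodule F V) :
    Module.rank F U ≤ Module.rank F (U.map W.mkQ) + Module.rank F W := by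
  have h := LinearMap.rank_range_add_rank_ker (W.mkQ.comp U.subtype)
  rw [LinearMap.range_comp, Submodule.range_subtype] at h
  rw [← h]
  gcongr
  refine LinearMap.rank_le_of_injective
    (LinearMap.codRestrict W ((U.subtype).comp (LinearMap.ker (W.mkQ.comp U.subtype)).subtype)
      (by rintro ⟨⟨x, hx⟩, hk⟩
          simpa [Submodule.Quotient.mk_eq_zero] using hk)) ?_
  intro x y hxy
  have h2 := congrArg Subtype.val hxy
  simp only [LinearMap.codRestrict_apply, LinearMap.comp_apply, Submodule.coe_subtype] at h2
  exact Subtype.ext (Subtype.ext h2)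

private lemma rado_quot_step (W : Submodule F V) (X Y : Set V) (hY : Y ⊆ W) (c : ℕ)
    (hW : Module.rank F W ≤ c) (k : ℕ)
    (hk : (k : Cardinal) + c ≤ Module.rank F (Submodule.span F (X ∪ Y))) :
    (k : Cardinal) ≤ Module.rank F (Submodule.span F (W.mkQ '' X)) := by
  have h1 : (Submodule.span F (X ∪ Y)).map W.mkQ = Submodule.span F (W.mkQ '' X) := by
    rw [Submodule.map_span, Set.image_union]
    refine le_antisymm (span_le.mpr ?_) (span_mono subset_union_left)
    rintro z (hz | ⟨y, hy, rfl⟩)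
    · exact subset_span hz
    · have : W.mkQ y = 0 := by simpa [Submodule.Quotient.mk_eq_zero] using hY hy
      rw [this]; exact zero_mem _
  have h2 := rado_rank_le W (Submodule.span F (X ∪ Y))
  rw [h1] at h2
  have h3 : (k : Cardinal) + c ≤
      Module.rank F (Submodule.span F (W.mkQ '' X)) + c :=
    hk.trans (h2.trans (add_le_add_right hW _))
  exact (Cardinal.add_le_add_iff_of_lt_aleph0 (nat_lt_aleph0 c)).mp h3

end Rado

section RadoMain

variable {F : Type*} [Field F]

private lemma rado_reindex {V : Type*} {I : Type*} (p : I → Prop) (S : I → Set V)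
    (K : Finset {i // p i}) :
    (⋃ j ∈ K.map (Function.Embedding.subtype p), S j) = ⋃ j ∈ K, S ↑j := by
  ext x
  simp only [Set.mem_iUnion, exists_prop, Finset.mem_map, Function.Embedding.coe_subtype]
  constructor
  · rintro ⟨i, ⟨j, hj, rfl⟩, hx⟩; exact ⟨j, hj, hx⟩
  · rintro ⟨j, hj, hx⟩; exact ⟨↑j, ⟨j, hj, rfl⟩, hx⟩

private lemma rado_aux (n : ℕ) :
    ∀ (V : Type v) [AddCommGroup V] [Module F V] (I : Type u) [Fintype I],
      Fintype.card I ≤ n →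
      ∀ S : I → Set V,
        (∀ J : Finset I,
          (J.card : Cardinal) ≤ Module.rank F (Submodule.span F (⋃ j ∈ J, S j))) →
        ∃ v : I → V, (∀ i, v i ∈ S i) ∧ LinearIndependent F v := by
  induction n with
  | zero =>
    intro V _ _ I _ hcard S _
    have : IsEmpty I := Fintype.card_eq_zero_iff.mp (Nat.le_zero.mp hcard)
    exact ⟨fun i => isEmptyElim i, fun i => isEmptyElim i, linearIndependent_empty_type⟩
  | succ n IH =>
    intro V _ _ I _ hcard S hS
    classical
    rcases isEmpty_or_nonempty I with hI | hI
    · exact ⟨fun i => isEmptyElim i, fun i => isEmptyElim i, linearIndependent_empty_type⟩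
    by_cases htight : ∃ J : Finset I, J.Nonempty ∧ J ≠ Finset.univ ∧
        Module.rank F (Submodule.span F (⋃ j ∈ J, S j)) ≤ J.card
    · -- tight case
      obtain ⟨J, hJne, hJuniv, hJrank⟩ := htight
      set W : Submodule F V := Submodule.span F (⋃ j ∈ J, S j) with hW
      have hJlt : J.card < Fintype.card I := J.card_lt_iff_ne_univ.mpr hJuniv
      -- step A : choose independent vectors indexed by J
      obtain ⟨a, ha_mem, ha_ind⟩ :=
        IH V {i // i ∈ J} (by simp only [Fintype.card_coe]; omega) (fun j => S ↑j)
          (by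
            intro K
            have := hS (K.map (Function.Embedding.subtype _))
            rwa [Finset.card_map, rado_reindex (· ∈ J) S K] at this)
      have haW : ∀ j, a j ∈ W := fun j =>
        subset_span (Set.mem_biUnion j.2 (ha_mem j))
      -- step B : quotient
      set I' := {i : I // i ∉ J}
      have hcard' : Fintype.card I' ≤ n := by
        have h1 : Fintype.card I' = Fintype.card I - J.card := by
          rw [Fintype.card_subtype_compl, Fintype.card_coe]
        have h2 : 1 ≤ J.card := hJne.card_pos
        omega
      obtain ⟨b, hb_mem, hb_ind⟩ :=
        IH (V ⧸ W) I' hcard' (fun i => W.mkQ '' S ↑i)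
          (by
            intro K
            set K' := K.map (Function.Embedding.subtype _) with hK'
            have hdisj : Disjoint K' J := by
              simp only [Finset.disjoint_left, hK', Finset.mem_map,
                Function.Embedding.coe_subtype]
              rintro x ⟨j, hj, rfl⟩
              exact j.2
            have hcardu : (K' ∪ J).card = K.card + J.card := by
              rw [Finset.card_union_of_disjoint hdisj, Finset.card_map]
            have hU : (⋃ j ∈ K' ∪ J, S j) = (⋃ j ∈ K', S j) ∪ ⋃ j ∈ J, S j := by
              ext x
              simp only [Set.mem_iUnion, Finset.mem_union, Set.mem_union]
              constructor
              · rintro ⟨i, hi | hi, hx⟩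
                · exact Or.inl ⟨i, hi, hx⟩
                · exact Or.inr ⟨i, hi, hx⟩
              · rintro (⟨i, hi, hx⟩ | ⟨i, hi, hx⟩)
                exacts [⟨i, Or.inl hi, hx⟩, ⟨i, Or.inr hi, hx⟩]
            have hk := hS (K' ∪ J)
            rw [hcardu, hU, Nat.cast_add] at hk
            have := rado_quot_step W (⋃ j ∈ K', S j) (⋃ j ∈ J, S j)
              (by rw [hW]; exact subset_span) J.card hJrank K.card hk
            rwa [rado_reindex _ S K, Set.image_iUnion₂] at this)
      choose u hu1 hu2 using fun i : I' => hb_mem i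
      -- combine
      let a' : {i // i ∈ J} → W := fun j => ⟨a j, haW j⟩
      have ha' : LinearIndependent F a' :=
        LinearIndependent.of_comp W.subtype (by exact ha_ind)
      have hbq : LinearIndependent F ((Submodule.Quotient.mk (p := W)) ∘ u) := by
        have : (Submodule.Quotient.mk (p := W)) ∘ u = b := by
          funext i
          rw [Function.comp_apply, ← Submodule.mkQ_apply, hu2]
        rw [this]; exact hb_ind
      have hsum := LinearIndependent.sumElim_of_quotient ha' u hbq
      refine ⟨Sum.elim (fun j => ((a' j : V))) u ∘ (Equiv.sumCompl (· ∈ J)).symm, ?_,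
        hsum.comp _ (Equiv.sumCompl (· ∈ J)).symm.injective⟩
      intro i
      by_cases hij : i ∈ J
      · rw [Function.comp_apply, Equiv.sumCompl_symm_apply_of_pos hij]
        exact ha_mem ⟨i, hij⟩
      · rw [Function.comp_apply, Equiv.sumCompl_symm_apply_of_neg hij]
        exact hu1 ⟨i, hij⟩
    · -- no tight set
      push_neg at htight
      obtain ⟨i0⟩ := hI
      -- find a nonzero vector in S i0
      have hsingle : (⋃ j ∈ ({i0} : Finset I), S j) = S i0 := by
        ext x
        simp
      have h1 : (1 : Cardinal) ≤ Module.rank F (Submodule.span F (S i0)) := by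
        have := hS {i0}
        rwa [hsingle, Finset.card_singleton, Nat.cast_one] at this
      have : ∃ v0 ∈ S i0, v0 ≠ (0 : V) := by
        by_contra hcon
        push_neg at hcon
        have : S i0 ⊆ {0} := fun x hx => hcon x hx
        have hle : Submodule.span F (S i0) ≤ ⊥ := by
          rw [← Submodule.span_zero_singleton F]
          exact span_mono this
        rw [le_bot_iff] at hle
        rw [hle] at h1
        simp [rank_bot] at h1
      obtain ⟨v0, hv0S, hv0⟩ := this
      set W : Submodule F V := Submodule.span F {v0} with hW
      have hWrank : Module.rank F W ≤ (1 : ℕ) := by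
        have := rank_span_le (R := F) ({v0} : Set V)
        simpa using this
      set I' := {i : I // ¬ i = i0}
      have hcard' : Fintype.card I' ≤ n := by
        have h1 : Fintype.card I' = Fintype.card I - Fintype.card {i : I // i = i0} :=
          Fintype.card_subtype_compl _
        have h2 : Fintype.card {i : I // i = i0} = 1 := Fintype.card_subtype_eq i0
        omega
      obtain ⟨b, hb_mem, hb_ind⟩ :=
        IH (V ⧸ W) I' hcard' (fun i => W.mkQ '' S ↑i)
          (by
            intro K
            rcases K.eq_empty_or_nonempty with rfl | hKne
            · simp
            set K' := K.map (Function.Embedding.subtype _) with hK'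
            have hK'ne : K'.Nonempty := hKne.map
            have hK'univ : K' ≠ Finset.univ := by
              intro hcon
              have : i0 ∈ K' := hcon ▸ Finset.mem_univ i0
              simp only [hK', Finset.mem_map, Function.Embedding.coe_subtype] at this
              obtain ⟨j, _, hj⟩ := this
              exact j.2 hj
            have hk := htight K' hK'ne hK'univ
            have hk2 : (K'.card : Cardinal) + 1 ≤
                Module.rank F (Submodule.span F (⋃ j ∈ K', S j)) :=
              le_trans (Cardinal.add_one_le_succ _) (Order.succ_le_of_lt hk)
            have hk3 : (K.card : Cardinal) + (1 : ℕ) ≤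
                Module.rank F (Submodule.span F ((⋃ j ∈ K', S j) ∪ ∅)) := by
              rw [Set.union_empty, Nat.cast_one]
              rwa [Finset.card_map] at hk2
            have := rado_quot_step W (⋃ j ∈ K', S j) ∅ (by simp) 1
              (by simpa using hWrank) K.card hk3
            rwa [rado_reindex _ S K, Set.image_iUnion₂] at this)
      choose u hu1 hu2 using fun i : I' => hb_mem i
      haveI : Unique {i : I // i = i0} :=
        ⟨⟨⟨i0, rfl⟩⟩, fun j => Subtype.ext j.2⟩
      let a' : {i : I // i = i0} → W := fun _ => ⟨v0, subset_span rfl⟩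
      have ha' : LinearIndependent F a' := by
        refine linearIndependent_unique_iff.mpr ?_
        simp only [a', ne_eq, Submodule.mk_eq_zero]
        exact hv0
      have hbq : LinearIndependent F ((Submodule.Quotient.mk (p := W)) ∘ u) := by
        have : (Submodule.Quotient.mk (p := W)) ∘ u = b := by
          funext i
          rw [Function.comp_apply, ← Submodule.mkQ_apply, hu2]
        rw [this]; exact hb_ind
      have hsum := LinearIndependent.sumElim_of_quotient ha' u hbq
      refine ⟨Sum.elim (fun j => ((a' j : V))) u ∘ (Equiv.sumCompl (· = i0)).symm, ?_,
        hsum.comp _ (Equiv.sumCompl (· = i0)).symm.injective⟩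
      intro i
      by_cases hij : i = i0
      · rw [Function.comp_apply, Equiv.sumCompl_symm_apply_of_pos (p := (· = i0)) hij]
        subst hij
        exact hv0S
      · rw [Function.comp_apply, Equiv.sumCompl_symm_apply_of_neg (p := (· = i0)) hij]
        exact hu1 ⟨i, hij⟩

end RadoMain

/-- Rado's theorem on independence relations. -/
theorem stmt0 (F V : Type*) [Field F] [AddCommGroup V] [Module F V]
    (I : Type*) [Fintype I] (S : I → Set V)
    (h : ∀ J : Finset I,
      (J.card : Cardinal) ≤ Module.rank F (Submodule.span F (⋃ j ∈ J, S j))) :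
    ∃ v : I → V, (∀ i, v i ∈ S i) ∧ LinearIndependent F v :=
  rado_aux (Fintype.card I) V I le_rfl S h
end

section
/- Let n ≥ 1 and let I be a finite set. Suppose for each i ∈ I we have a subset S_i ⊆ 𝔽₂ⁿ with 0 ∈ S_i and #S_i ≥ 2. If every tuple (v_i)_{i∈I} ∈ ∏_{i∈I} S_i is linearly dependent, then there exists a nonempty subset J ⊆ I such that the sumset ∑_{j∈J} S_j is a nontrivial linear subspace of 𝔽₂ⁿ. -/
namespace Stmt1Aux

set_option linter.unusedSectionVars false
set_option maxHeartbeats 1000000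

open Submodule Finset

variable {I : Type*} [Fintype I] [DecidableEq I]
variable {M : Type*} [AddCommGroup M] [Module (ZMod 2) M]

lemma zmod2_eq_one {a : ZMod 2} (h : a ≠ 0) : a = 1 := by
  revert h; revert a; decide

lemma addself (z : M) : z + z = 0 := by
  have : ((2 : ZMod 2) • z) = z + z := two_smul _ z
  rw [show (2 : ZMod 2) = 0 by decide, zero_smul] at this
  exact this.symm

lemma negself (z : M) : -z = z :=
  neg_eq_of_add_eq_zero_left (addself z)

/-- Dependence of the family `w` restricted to index finset `K`. -/
def Dep (K : Finset I) (w : I → M) : Prop :=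
  ∃ c : I → ZMod 2, (∑ k ∈ K, c k • w k) = 0 ∧ ∃ k ∈ K, c k ≠ 0

lemma not_dep_iff {K : Finset I} {w : I → M} :
    ¬ Dep K w ↔ ∀ c : I → ZMod 2, (∑ k ∈ K, c k • w k) = 0 → ∀ k ∈ K, c k = 0 := by
  unfold Dep
  push_neg
  rfl

def AllDep (S : I → Set M) (K : Finset I) : Prop :=
  ∀ w : I → M, (∀ k ∈ K, w k ∈ S k) → Dep K w

lemma mem_span_iff {K : Finset I} {w : I → M} {x : M} :
    x ∈ span (ZMod 2) (w '' K) ↔ ∃ c : I → ZMod 2, x = ∑ k ∈ K, c k • w k := by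
  constructor
  · intro hx
    induction hx using span_induction with
    | mem y hy =>
      obtain ⟨k, hk, rfl⟩ := hy
      refine ⟨fun j => if j = k then 1 else 0, ?_⟩
      rw [Finset.sum_eq_single k]
      · simp
      · intro b hb hbk; simp [hbk]
      · intro h; exact absurd hk h
    | zero => exact ⟨0, by simp⟩
    | add x y hx hy ihx ihy =>
      obtain ⟨c, rfl⟩ := ihx; obtain ⟨d, rfl⟩ := ihy
      refine ⟨c + d, ?_⟩
      rw [← Finset.sum_add_distrib]
      exact Finset.sum_congr rfl fun k _ => by simp [add_smul]
    | smul a x hx ihx =>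
      obtain ⟨c, rfl⟩ := ihx
      refine ⟨a • c, ?_⟩
      rw [Finset.smul_sum]
      exact Finset.sum_congr rfl fun k _ => by simp [smul_smul]
  · rintro ⟨c, rfl⟩
    exact sum_mem fun k hk => smul_mem _ _ (subset_span ⟨k, by simpa using hk, rfl⟩)

lemma key (S : I → Set M) (J : Finset I) (hJ : AllDep S J) {p : I} (hp : p ∈ J)
    {w : I → M} (hw : ∀ j ∈ J.erase p, w j ∈ S j) (hind : ¬ Dep (J.erase p) w)
    {x : M} (hx : x ∈ S p) : ∃ c : I → ZMod 2, x = ∑ j ∈ J.erase p, c j • w j := by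
  obtain ⟨c, hsum, k, hk, hck⟩ := hJ (Function.update w p x) (by
    intro j hj
    by_cases hjp : j = p
    · subst hjp; simpa using hx
    · rw [Function.update_of_ne hjp]; exact hw j (Finset.mem_erase.2 ⟨hjp, hj⟩))
  have hsplit : c p • x + ∑ j ∈ J.erase p, c j • w j = 0 := by
    rw [← hsum, ← Finset.add_sum_erase J _ hp]
    congr 1
    · rw [Function.update_self]
    · exact Finset.sum_congr rfl fun j hj => by
        rw [Function.update_of_ne (Finset.mem_erase.1 hj).1]
  by_cases hcp : c p = 0
  · exfalso
    rw [hcp, zero_smul, zero_add] at hsplit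
    have hk' : k ≠ p := fun h => hck (h ▸ hcp)
    exact (not_dep_iff.1 hind c hsplit k (Finset.mem_erase.2 ⟨hk', hk⟩)) |> hck
  · refine ⟨c, ?_⟩
    rw [zmod2_eq_one hcp, one_smul] at hsplit
    have := neg_eq_of_add_eq_zero_left hsplit
    rw [negself] at this
    exact this.symm

lemma indep_not_mem {K : Finset I} {w : I → M} (h : ¬ Dep K w) {k : I} (hk : k ∈ K) :
    w k ∉ span (ZMod 2) (w '' (K.erase k)) := by
  intro hmem
  obtain ⟨c, hc⟩ := mem_span_iff.1 hmem
  apply h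
  refine ⟨fun j => if j = k then 1 else c j, ?_, k, hk, by simp⟩
  rw [← Finset.add_sum_erase K _ hk]
  have : ∑ j ∈ K.erase k, (if j = k then 1 else c j) • w j = ∑ j ∈ K.erase k, c j • w j :=
    Finset.sum_congr rfl fun j hj => by rw [if_neg (Finset.mem_erase.1 hj).1]
  rw [this, ← hc]
  simp [addself]

/-- The invariant of the closure process. -/
def Good (S : I → Set M) (J : Finset I) (j0 : I) (v : I → M) (R : Finset I) : Prop :=
  R ⊆ J.erase j0 ∧ ∀ p ∈ insert j0 R, ∃ w : I → M,
    (∀ j ∈ J.erase p, w j ∈ S j) ∧ ¬ Dep (J.erase p) w ∧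
    (∀ j, j ∉ insert j0 R → w j = v j) ∧
    span (ZMod 2) (w '' ((insert j0 R).erase p)) = span (ZMod 2) (v '' R)

lemma step (S : I → Set M) (J : Finset I) (hJ : AllDep S J) {j0 : I} (hj0 : j0 ∈ J)
    {v : I → M} (hvI : ¬ Dep (J.erase j0) v)
    {R : Finset I} (hG : Good S J j0 v R) {p : I} {x : M} (hp : p ∈ insert j0 R) (hx : x ∈ S p)
    (hxN : x ∉ span (ZMod 2) (v '' R)) :
    ∃ R', Good S J j0 v R' ∧ R ⊂ R' := by
  obtain ⟨hR, hwit⟩ := hG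
  obtain ⟨w, hwS, hwI, hwv, hwspan⟩ := hwit p hp
  have hRJ : ∀ j ∈ R, j ∈ J := fun j hj => Finset.mem_of_mem_erase (hR hj)
  have hRj0 : ∀ j ∈ R, j ≠ j0 := fun j hj => (Finset.mem_erase.1 (hR hj)).1
  have hpJ : p ∈ J := by
    rcases Finset.mem_insert.1 hp with h | h
    · exact h ▸ hj0
    · exact hRJ p h
  obtain ⟨c, hc⟩ := key S J hJ hpJ hwS hwI hx
  set A : Finset I := (insert j0 R).erase p with hA
  set B : Finset I := (J.erase j0) \ R with hB
  have hsplitJ : J.erase p = A ∪ B := by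
    ext j
    simp only [hA, hB, Finset.mem_union, Finset.mem_erase, Finset.mem_insert, Finset.mem_sdiff]
    constructor
    · rintro ⟨hjp, hjJ⟩
      by_cases hjR : j ∈ R
      · exact Or.inl ⟨hjp, Or.inr hjR⟩
      · by_cases hjj0 : j = j0
        · exact Or.inl ⟨hjp, Or.inl hjj0⟩
        · exact Or.inr ⟨⟨hjj0, hjJ⟩, hjR⟩
    · rintro (⟨hjp, hj⟩ | ⟨⟨hjj0, hjJ⟩, hjR⟩)
      · refine ⟨hjp, ?_⟩
        rcases hj with h | h
        · exact h ▸ hj0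
        · exact hRJ j h
      · refine ⟨?_, hjJ⟩
        intro hjp
        subst hjp
        rcases Finset.mem_insert.1 hp with h | h
        · exact hjj0 h
        · exact hjR h
  have hdisj : Disjoint A B := by
    rw [Finset.disjoint_left]
    intro j hjA hjB
    rw [hA, Finset.mem_erase] at hjA
    rw [hB, Finset.mem_sdiff] at hjB
    rcases Finset.mem_insert.1 hjA.2 with h | h
    · exact (Finset.mem_erase.1 hjB.1).1 h
    · exact hjB.2 h
  have hBnotin : ∀ j ∈ B, j ∉ insert j0 R := by
    intro j hj
    rw [hB, Finset.mem_sdiff] at hj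
    rw [Finset.mem_insert]
    rintro (h | h)
    · exact (Finset.mem_erase.1 hj.1).1 h
    · exact hj.2 h
  set y : M := ∑ j ∈ A, c j • w j with hy
  have hyN : y ∈ span (ZMod 2) (v '' R) := by
    rw [← hwspan]
    exact sum_mem fun j hj => smul_mem _ _ (subset_span ⟨j, by simpa using hj, rfl⟩)
  set F : Finset I := B.filter (fun j => c j ≠ 0) with hF
  have hFB : F ⊆ B := Finset.filter_subset _ _
  have hxF : x = y + ∑ j ∈ F, v j := by
    rw [hc, hsplitJ, Finset.sum_union hdisj]
    congr 1
    have h1 : ∑ j ∈ B, c j • w j = ∑ j ∈ B, c j • v j :=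
      Finset.sum_congr rfl fun j hj => by rw [hwv j (hBnotin j hj)]
    have h2 : ∑ j ∈ F, c j • v j = ∑ j ∈ B, c j • v j := by
      apply Finset.sum_filter_of_ne
      intro j _ hne hc0
      exact hne (by rw [hc0, zero_smul])
    have h3 : ∑ j ∈ F, c j • v j = ∑ j ∈ F, v j := by
      refine Finset.sum_congr rfl fun j hj => ?_
      rw [zmod2_eq_one (Finset.mem_filter.1 hj).2, one_smul]
    rw [h1, ← h2, h3]
  have hFne : F.Nonempty := by
    rw [Finset.nonempty_iff_ne_empty]
    intro h
    rw [h, Finset.sum_empty, add_zero] at hxF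
    exact hxN (hxF ▸ hyN)
  have hFsub : ∀ j ∈ F, j ∈ J ∧ j ≠ j0 ∧ j ∉ R := by
    intro j hj
    have := Finset.mem_sdiff.1 (hFB hj)
    exact ⟨Finset.mem_of_mem_erase this.1, (Finset.mem_erase.1 this.1).1, this.2⟩
  refine ⟨R ∪ F, ⟨?_, ?_⟩, ?_⟩
  · intro j hj
    rcases Finset.mem_union.1 hj with h | h
    · exact hR h
    · exact (Finset.mem_sdiff.1 (hFB h)).1
  · -- witnesses
    intro q hq
    have hins : insert j0 (R ∪ F) = (insert j0 R) ∪ F := by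
      rw [Finset.insert_union]
    by_cases hqold : q ∈ insert j0 R
    · obtain ⟨ω, hωS, hωI, hωv, hωspan⟩ := hwit q hqold
      refine ⟨ω, hωS, hωI, ?_, ?_⟩
      · intro j hj
        exact hωv j (fun hmem => hj (by
          rw [hins]; exact Finset.mem_union_left _ hmem))
      · apply le_antisymm
        · rw [span_le]
          rintro _ ⟨j, hj, rfl⟩
          simp only [Finset.coe_erase, Set.mem_diff, Finset.mem_coe, Set.mem_singleton_iff] at hj
          obtain ⟨hjmem, hjq⟩ := hj
          rw [hins] at hjmem
          rcases Finset.mem_union.1 hjmem with h | h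
          · have : ω j ∈ span (ZMod 2) (ω '' ((insert j0 R).erase q)) :=
              subset_span ⟨j, Finset.mem_coe.2 (Finset.mem_erase.2 ⟨hjq, h⟩), rfl⟩
            rw [hωspan] at this
            exact span_mono (Set.image_mono (by
              intro i hi; simp only [Finset.coe_union, Set.mem_union] at *; exact Or.inl hi)) this
          · rw [hωv j (hBnotin j (hFB h))]
            exact subset_span ⟨j, Finset.mem_coe.2 (Finset.mem_union_right _ h), rfl⟩
        · rw [span_le]
          rintro _ ⟨j, hj, rfl⟩
          simp only [Finset.coe_union, Set.mem_union, Finset.mem_coe] at hj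
          rcases hj with h | h
          · have : v j ∈ span (ZMod 2) (v '' R) := subset_span ⟨j, by simpa using h, rfl⟩
            rw [← hωspan] at this
            refine span_mono (Set.image_mono ?_) this
            intro i hi
            simp only [Finset.coe_erase, Set.mem_diff, Finset.mem_coe] at hi ⊢
            exact ⟨by rw [hins]; exact Finset.mem_union_left _ hi.1, hi.2⟩
          · have hjB := hBnotin j (hFB h)
            rw [← hωv j hjB]
            refine subset_span ⟨j, ?_, rfl⟩
            simp only [Finset.coe_erase, Set.mem_diff, Finset.mem_coe, Set.mem_singleton_iff]
            refine ⟨by rw [hins]; exact Finset.mem_union_right _ h, ?_⟩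
            intro hjq; exact hjB (hjq ▸ hqold)
    · -- q ∈ F, new element
      have hqF : q ∈ F := by
        rw [hins] at hq
        rcases Finset.mem_union.1 hq with h | h
        · exact absurd h hqold
        · exact h
      obtain ⟨hqJ, hqj0, hqR⟩ := hFsub q hqF
      have hqp : q ≠ p := fun h => hqold (h ▸ hp)
      have hqJ' : q ∈ J.erase j0 := Finset.mem_erase.2 ⟨hqj0, hqJ⟩
      have hvq : v q = x + y + ∑ j ∈ F.erase q, v j := by
        have h1 : x = y + (v q + ∑ j ∈ F.erase q, v j) := by
          rw [Finset.add_sum_erase F _ hqF]; exact hxF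
        have : v q = x - y - ∑ j ∈ F.erase q, v j := by
          rw [h1]; abel
        rw [this, sub_eq_add_neg, sub_eq_add_neg, negself, negself]
      set w' : I → M := Function.update w p x with hw'
      have hw'p : w' p = x := Function.update_self _ _ _
      have hw'ne : ∀ j, j ≠ p → w' j = w j := fun j hj => Function.update_of_ne hj _ _
      have hpJq : p ∈ J.erase q := Finset.mem_erase.2 ⟨fun h => hqp h.symm, hpJ⟩
      refine ⟨w', ?_, ?_, ?_, ?_⟩
      · -- values
        intro j hj
        obtain ⟨hjq, hjJ⟩ := Finset.mem_erase.1 hj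
        by_cases hjp : j = p
        · subst hjp; rw [hw'p]; exact hx
        · rw [hw'ne j hjp]; exact hwS j (Finset.mem_erase.2 ⟨hjp, hjJ⟩)
      · -- independence
        rw [not_dep_iff]
        intro c' hsum' kh hkh
        by_contra hckh
        have hsplit' : c' p • x + ∑ j ∈ (J.erase q).erase p, c' j • w j = 0 := by
          rw [← hsum', ← Finset.add_sum_erase (J.erase q) _ hpJq]
          congr 1
          · rw [hw'p]
          · exact Finset.sum_congr rfl fun j hj => by
              rw [hw'ne j (Finset.mem_erase.1 hj).1]
        have herase : (J.erase q).erase p = (J.erase p).erase q := Finset.erase_right_comm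
        by_cases hcp' : c' p = 0
        · -- relation among w on J.erase p
          rw [hcp', zero_smul, zero_add] at hsplit'
          have hqJp : q ∈ J.erase p := Finset.mem_erase.2 ⟨hqp, hqJ⟩
          have hzero : ∑ j ∈ J.erase p, (Function.update c' q 0) j • w j = 0 := by
            rw [← Finset.add_sum_erase (J.erase p) _ hqJp, Function.update_self, zero_smul,
              zero_add, ← herase]
            rw [show ∑ j ∈ (J.erase q).erase p, Function.update c' q 0 j • w j
                = ∑ j ∈ (J.erase q).erase p, c' j • w j from Finset.sum_congr rfl fun j hj => by
              rw [Function.update_of_ne (Finset.mem_erase.1 (Finset.mem_erase.1 hj).2).1]]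
            exact hsplit'
          have hkhq : kh ≠ q := (Finset.mem_erase.1 hkh).1
          have hkhp : kh ≠ p := fun h => hckh (h ▸ hcp')
          have := not_dep_iff.1 hwI _ hzero kh
            (Finset.mem_erase.2 ⟨hkhp, (Finset.mem_erase.1 hkh).2⟩)
          rw [Function.update_of_ne hkhq] at this
          exact hckh this
        · -- c' p = 1 : x in forbidden span
          rw [zmod2_eq_one hcp', one_smul] at hsplit'
          have hxrep : x = ∑ j ∈ (J.erase p).erase q, c' j • w j := by
            have := neg_eq_of_add_eq_zero_left hsplit'
            rw [negself, herase] at this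
            exact this.symm
          -- show v q ∈ span (v '' ((J.erase j0).erase q)) : contradiction
          set Wq := span (ZMod 2) (v '' ((J.erase j0).erase q)) with hWq
          have hyWq : y ∈ Wq := by
            refine span_mono (Set.image_mono ?_) hyN
            intro i hi
            exact Finset.mem_coe.2 (Finset.mem_erase.2
              ⟨fun h => hqR (h ▸ (Finset.mem_coe.1 hi)), hR (Finset.mem_coe.1 hi)⟩)
          have hsumWq : ∑ j ∈ F.erase q, v j ∈ Wq := by
            refine sum_mem fun j hj => subset_span ⟨j, ?_, rfl⟩
            obtain ⟨hjq, hjF⟩ := Finset.mem_erase.1 hj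
            obtain ⟨hjJ, hjj0, _⟩ := hFsub j hjF
            exact Finset.mem_coe.2 (Finset.mem_erase.2 ⟨hjq, Finset.mem_erase.2 ⟨hjj0, hjJ⟩⟩)
          have hxWq : x ∈ Wq := by
            rw [hxrep]
            refine sum_mem fun j hj => smul_mem _ _ ?_
            obtain ⟨hjq, hjJp⟩ := Finset.mem_erase.1 hj
            obtain ⟨hjp, hjJ⟩ := Finset.mem_erase.1 hjJp
            by_cases hjold : j ∈ insert j0 R
            · have : w j ∈ span (ZMod 2) (w '' A) :=
                subset_span ⟨j, Finset.mem_coe.2 (by rw [hA]; exact Finset.mem_erase.2 ⟨hjp, hjold⟩), rfl⟩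
              rw [hwspan] at this
              refine span_mono (Set.image_mono ?_) this
              intro i hi
              exact Finset.mem_coe.2 (Finset.mem_erase.2
                ⟨fun h => hqR (h ▸ (Finset.mem_coe.1 hi)), hR (Finset.mem_coe.1 hi)⟩)
            · rw [hwv j hjold]
              have hjj0 : j ≠ j0 := fun h => hjold (h ▸ Finset.mem_insert_self _ _)
              exact subset_span ⟨j, Finset.mem_coe.2 (Finset.mem_erase.2
                ⟨hjq, Finset.mem_erase.2 ⟨hjj0, hjJ⟩⟩), rfl⟩
          have : v q ∈ Wq := by
            rw [hvq]
            exact add_mem (add_mem hxWq hyWq) hsumWq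
          exact indep_not_mem hvI hqJ' this
      · -- agreement with v
        intro j hj
        have hjp : j ≠ p := by
          intro h; subst h
          exact hj (by rw [hins]; exact Finset.mem_union_left _ hp)
        rw [hw'ne j hjp]
        exact hwv j (fun hmem => hj (by rw [hins]; exact Finset.mem_union_left _ hmem))
      · -- span condition
        have hq_not_old : q ∉ insert j0 R := hqold
        apply le_antisymm
        · rw [span_le]
          rintro _ ⟨j, hj, rfl⟩
          simp only [Finset.coe_erase, Set.mem_diff, Finset.mem_coe, Set.mem_singleton_iff] at hj
          obtain ⟨hjmem, hjq⟩ := hj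
          rw [hins] at hjmem
          have hvR_le : span (ZMod 2) (v '' R) ≤ span (ZMod 2) (v '' ↑(R ∪ F)) :=
            span_mono (Set.image_mono (by simp only [Finset.coe_union]; exact Set.subset_union_left))
          by_cases hjp : j = p
          · subst hjp
            rw [hw'p, hxF]
            refine add_mem (hvR_le hyN) (sum_mem fun i hi => subset_span ⟨i, ?_, rfl⟩)
            simp only [Finset.coe_union, Set.mem_union, Finset.mem_coe]
            exact Or.inr hi
          · rw [hw'ne j hjp]
            rcases Finset.mem_union.1 hjmem with h | h
            · have : w j ∈ span (ZMod 2) (w '' A) :=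
                subset_span ⟨j, Finset.mem_coe.2 (by rw [hA]; exact Finset.mem_erase.2 ⟨hjp, h⟩), rfl⟩
              rw [hwspan] at this
              exact hvR_le this
            · rw [hwv j (hBnotin j (hFB h))]
              refine subset_span ⟨j, ?_, rfl⟩
              simp only [Finset.coe_union, Set.mem_union, Finset.mem_coe]
              exact Or.inr h
        · rw [span_le]
          rintro _ ⟨j, hj, rfl⟩
          simp only [Finset.coe_union, Set.mem_union, Finset.mem_coe] at hj
          set L := span (ZMod 2) (w' '' (((insert j0 (R ∪ F))).erase q)) with hL
          have hAL : span (ZMod 2) (w '' A) ≤ L := by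
            rw [span_le]
            rintro _ ⟨i, hi, rfl⟩
            simp only [hA, Finset.coe_erase, Set.mem_diff, Finset.mem_coe,
              Set.mem_singleton_iff] at hi
            obtain ⟨himem, hip⟩ := hi
            rw [← hw'ne i hip]
            refine subset_span ⟨i, ?_, rfl⟩
            simp only [Finset.coe_erase, Set.mem_diff, Finset.mem_coe, Set.mem_singleton_iff]
            refine ⟨by rw [hins]; exact Finset.mem_union_left _ himem, ?_⟩
            intro h; exact hq_not_old (h ▸ himem)
          have hFL : ∀ i ∈ F, i ≠ q → v i ∈ L := by
            intro i hi hiq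
            have hiB := hBnotin i (hFB hi)
            have hip : i ≠ p := fun h => hiB (h ▸ hp)
            rw [← hwv i hiB, ← hw'ne i hip]
            refine subset_span ⟨i, ?_, rfl⟩
            simp only [Finset.coe_erase, Set.mem_diff, Finset.mem_coe, Set.mem_singleton_iff]
            exact ⟨by rw [hins]; exact Finset.mem_union_right _ hi, hiq⟩
          have hRL : ∀ i ∈ R, v i ∈ L := by
            intro i hi
            have : v i ∈ span (ZMod 2) (v '' R) := subset_span ⟨i, by simpa using hi, rfl⟩
            rw [← hwspan] at this
            exact hAL this
          rcases hj with h | h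
          · exact hRL j h
          · by_cases hjq : j = q
            · subst hjq
              rw [hvq]
              have hxL : x ∈ L := by
                rw [← hw'p]
                refine subset_span ⟨p, ?_, rfl⟩
                simp only [Finset.coe_erase, Set.mem_diff, Finset.mem_coe, Set.mem_singleton_iff]
                exact ⟨by rw [hins]; exact Finset.mem_union_left _ hp, fun h' => hqp h'.symm⟩
              have hyL : y ∈ L := by
                have := hyN; rw [← hwspan] at this; exact hAL this
              refine add_mem (add_mem hxL hyL) (sum_mem fun i hi => ?_)
              obtain ⟨hiq, hiF⟩ := Finset.mem_erase.1 hi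
              exact hFL i hiF hiq
            · exact hFL j h hjq
  · -- strictness
    refine Finset.ssubset_iff_of_subset Finset.subset_union_left |>.2 ?_
    obtain ⟨k, hk⟩ := hFne
    exact ⟨k, Finset.mem_union_right _ hk, (hFsub k hk).2.2⟩

lemma dep_of_card [Module.Finite (ZMod 2) M] {Q R : Finset I} {u v : I → M}
    (h : ∀ p ∈ Q, u p ∈ span (ZMod 2) (v '' R)) (hcard : R.card < Q.card) : Dep Q u := by
  haveI := Classical.decEq M
  by_contra hnd
  rw [not_dep_iff] at hnd
  set W0 := span (ZMod 2) (v '' R) with hW0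
  have hli : LinearIndependent (ZMod 2) (fun p : Q => (⟨u p, h p p.2⟩ : W0)) := by
    rw [Fintype.linearIndependent_iff]
    intro g hg i
    set c : I → ZMod 2 := fun j => if hj : j ∈ Q then g ⟨j, hj⟩ else 0 with hcdef
    have hsum : ∑ k ∈ Q, c k • u k = 0 := by
      have hval := congrArg (Subtype.val) hg
      push_cast at hval
      have hval2 : ∑ i : Q, g i • u i = 0 := by
        simpa using hval
      rw [← Finset.sum_attach Q (fun k => c k • u k)]
      rw [show ∑ i ∈ Q.attach, c ↑i • u ↑i = ∑ i ∈ Q.attach, g i • u ↑i from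
        Finset.sum_congr rfl fun i _ => by rw [hcdef]; simp [i.2]]
      simpa [Finset.sum_coe_sort] using hval2
    have := hnd c hsum i i.2
    rw [hcdef] at this
    simpa [i.2] using this
  have h1 := hli.fintype_card_le_finrank
  rw [Fintype.card_coe] at h1
  have h2 : Module.finrank (ZMod 2) W0 ≤ R.card := by
    have h3 := finrank_span_finset_le_card (R := ZMod 2) (R.image v)
    rw [Set.finrank, Finset.coe_image] at h3
    exact h3.trans (Finset.card_image_le)
  omega

lemma grow (S : I → Set M) (J : Finset I) (hJ : AllDep S J) {j0 : I} (hj0 : j0 ∈ J)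
    {v : I → M} (hvI : ¬ Dep (J.erase j0) v) :
    ∀ (d : ℕ) (R : Finset I), Good S J j0 v R → (J.erase j0).card - R.card ≤ d →
    ∃ R', Good S J j0 v R' ∧ ∀ p ∈ insert j0 R', ∀ x ∈ S p, x ∈ span (ZMod 2) (v '' R') := by
  intro d
  induction d with
  | zero =>
    intro R hG hcard
    by_cases hstab : ∀ p ∈ insert j0 R, ∀ x ∈ S p, x ∈ span (ZMod 2) (v '' R)
    · exact ⟨R, hG, hstab⟩
    · exfalso
      push_neg at hstab
      obtain ⟨p, hp, x, hx, hxN⟩ := hstab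
      obtain ⟨R', hG', hss⟩ := step S J hJ hj0 hvI hG hp hx hxN
      have h1 := Finset.card_lt_card hss
      have h2 := Finset.card_le_card hG'.1
      have h3 := Finset.card_le_card (hG.1)
      omega
  | succ d ih =>
    intro R hG hcard
    by_cases hstab : ∀ p ∈ insert j0 R, ∀ x ∈ S p, x ∈ span (ZMod 2) (v '' R)
    · exact ⟨R, hG, hstab⟩
    · push_neg at hstab
      obtain ⟨p, hp, x, hx, hxN⟩ := hstab
      obtain ⟨R', hG', hss⟩ := step S J hJ hj0 hvI hG hp hx hxN
      have h1 := Finset.card_lt_card hss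
      have h2 := Finset.card_le_card hG'.1
      exact ih R' hG' (by omega)

lemma main [Module.Finite (ZMod 2) M] (S : I → Set M) (J : Finset I) (hJ : AllDep S J)
    (hmin : ∀ K, K ⊂ J → ¬ AllDep S K) {j0 : I} (hj0 : j0 ∈ J)
    {v : I → M} (hv : ∀ k ∈ J.erase j0, v k ∈ S k) (hvI : ¬ Dep (J.erase j0) v) :
    ∀ p ∈ J, ∀ x ∈ S p, x ∈ span (ZMod 2) (v '' (J.erase j0)) := by
  have hGood0 : Good S J j0 v ∅ := by
    refine ⟨Finset.empty_subset _, ?_⟩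
    intro p hp
    have hpj0 : p = j0 := by simpa using hp
    subst hpj0
    refine ⟨v, hv, hvI, fun j _ => rfl, ?_⟩
    rw [Finset.erase_insert (Finset.notMem_empty _)]
  obtain ⟨R, hGR, hstab⟩ := grow S J hJ hj0 hvI ((J.erase j0).card) ∅ hGood0 (by simp)
  have hj0R : j0 ∉ R := fun hmem => (Finset.mem_erase.1 (hGR.1 hmem)).1 rfl
  have hQsub : insert j0 R ⊆ J :=
    Finset.insert_subset hj0 (hGR.1.trans (Finset.erase_subset _ _))
  have hQdep : AllDep S (insert j0 R) := by
    intro u hu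
    refine dep_of_card (v := v) (R := R) (fun p hp => hstab p hp (u p) (hu p hp)) ?_
    rw [Finset.card_insert_of_notMem hj0R]
    omega
  have hQJ : insert j0 R = J := by
    by_contra hne
    exact hmin _ (lt_of_le_of_ne hQsub hne) hQdep
  have hR : R = J.erase j0 := by
    rw [← hQJ, Finset.erase_insert hj0R]
  intro p hp x hx
  rw [← hR]
  exact hstab p (by rw [hQJ]; exact hp) x hx

lemma exists_minimal {P : Finset I → Prop} (h : ∃ J, P J) :
    ∃ J, P J ∧ ∀ K, K ⊂ J → ¬ P K := by
  obtain ⟨J, hJ⟩ := h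
  induction J using Finset.strongInductionOn with
  | _ J ih =>
    by_cases hK : ∃ K, K ⊂ J ∧ P K
    · obtain ⟨K, hKJ, hPK⟩ := hK
      exact ih K hKJ hPK
    · push_neg at hK
      exact ⟨J, hJ, hK⟩

end Stmt1Aux

theorem stmt1 (n : ℕ) (hn : 1 ≤ n) (I : Type*) [Fintype I]
    (S : I → Set (Fin n → ZMod 2))
    (h0 : ∀ i, (0 : Fin n → ZMod 2) ∈ S i) (h2 : ∀ i, 2 ≤ (S i).ncard)
    (hdep : ∀ v : I → (Fin n → ZMod 2), (∀ i, v i ∈ S i) →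
      ¬ LinearIndependent (ZMod 2) v) :
    ∃ J : Finset I, J.Nonempty ∧
      ∃ W : Submodule (ZMod 2) (Fin n → ZMod 2), W ≠ ⊥ ∧
        {x | ∃ s : I → (Fin n → ZMod 2), (∀ j ∈ J, s j ∈ S j) ∧ x = ∑ j ∈ J, s j}
          = (W : Set (Fin n → ZMod 2)) := by
  classical
  open Stmt1Aux Finset Submodule in
  -- every transversal over univ is dependent in our combinatorial sense
  have huniv : AllDep S Finset.univ := by
    intro w hw
    have hLI := hdep w (fun i => hw i (Finset.mem_univ i))
    rw [Fintype.linearIndependent_iff] at hLI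
    push_neg at hLI
    obtain ⟨g, hg, i, hi⟩ := hLI
    exact ⟨g, hg, i, Finset.mem_univ i, hi⟩
  obtain ⟨J, hJ, hminJ⟩ := exists_minimal ⟨Finset.univ, huniv⟩
  have hJne : J.Nonempty := by
    rcases Finset.eq_empty_or_nonempty J with h | h
    · exfalso
      obtain ⟨c, hsum, k, hk, hck⟩ := hJ (fun _ => 0) (fun k hk => by
        rw [h] at hk; exact absurd hk (Finset.notMem_empty _))
      rw [h] at hk
      exact Finset.notMem_empty _ hk
    · exact h
  obtain ⟨j0, hj0⟩ := hJne
  have hnz : ∀ i, ∃ x ∈ S i, x ≠ 0 := by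
    intro i
    obtain ⟨b, hb, hbne⟩ := Set.exists_ne_of_one_lt_ncard (h2 i) 0
    exact ⟨b, hb, hbne⟩
  have hJ'ne : (J.erase j0).Nonempty := by
    rw [Finset.nonempty_iff_ne_empty]
    intro hh
    have hJsing : J = {j0} := by
      rcases (Finset.erase_eq_empty_iff _ _).1 hh with h | h
      · exact absurd (h ▸ hj0) (Finset.notMem_empty _)
      · exact h
    obtain ⟨x0, hx0S, hx0⟩ := hnz j0
    obtain ⟨c, hsum, k, hk, hck⟩ := hJ (fun _ => x0) (fun k hkJ => by
      rw [hJsing, Finset.mem_singleton] at hkJ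
      rw [hkJ]
      exact hx0S)
    rw [hJsing, Finset.mem_singleton] at hk
    subst hk
    rw [hJsing, Finset.sum_singleton] at hsum
    rw [zmod2_eq_one hck, one_smul] at hsum
    exact hx0 hsum
  have hJ'dep : ¬ AllDep S (J.erase j0) := hminJ _ (Finset.erase_ssubset hj0)
  rw [AllDep] at hJ'dep
  push_neg at hJ'dep
  obtain ⟨v, hv, hvI⟩ := hJ'dep
  have hmain := Stmt1Aux.main S J hJ hminJ hj0 hv hvI
  refine ⟨J, ⟨j0, hj0⟩, Submodule.span (ZMod 2) (v '' (J.erase j0)), ?_, ?_⟩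
  · obtain ⟨k, hk⟩ := hJ'ne
    have hvk : v k ≠ 0 := by
      intro h0'
      apply hvI
      refine ⟨fun j => if j = k then 1 else 0, ?_, k, hk, by simp⟩
      rw [Finset.sum_eq_single k]
      · rw [h0']; simp
      · intro b hb hbk; simp [hbk]
      · intro hnot; exact absurd hk hnot
    intro hbot
    apply hvk
    have hmem : v k ∈ Submodule.span (ZMod 2) (v '' (J.erase j0)) :=
      Submodule.subset_span ⟨k, Finset.mem_coe.2 hk, rfl⟩
    rw [hbot] at hmem
    simpa using hmem
  · ext x
    simp only [Set.mem_setOf_eq, SetLike.mem_coe]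
    constructor
    · rintro ⟨s, hs, rfl⟩
      exact Submodule.sum_mem _ fun j hj => hmain j hj _ (hs j hj)
    · intro hx
      obtain ⟨c, rfl⟩ := Stmt1Aux.mem_span_iff.1 hx
      refine ⟨fun j => if j ∈ J.erase j0 then c j • v j else 0, ?_, ?_⟩
      · intro j hjJ
        by_cases hj : j ∈ J.erase j0
        · simp only [if_pos hj]
          rcases (by decide : ∀ a : ZMod 2, a = 0 ∨ a = 1) (c j) with h | h
          · rw [h, zero_smul]; exact h0 j
          · rw [h, one_smul]; exact hv j hj
        · simp only [if_neg hj]; exact h0 j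
      · rw [← Finset.add_sum_erase J _ hj0]
        simp only [if_neg (Finset.notMem_erase _ _), zero_add]
        exact (Finset.sum_congr rfl fun j hj => by simp only [if_pos hj]).symm
end

section
/- Let k be a field, v a place of k with completion k_v (more generally: let k ↪ k_v be a field embedding). Let h ∈ k[x] be an irreducible polynomial with a root θ ∈ k_v. If g ∈ k[x] is a polynomial such that g − θ is irreducible over k_v, then the composition h ∘ g is irreducible over k. Moreover, if h and g − θ are separable, then h ∘ g is separable. -/
open Polynomial IntermediateField

-- A polynomial over a field whose image under `map` is irreducible is irreducible.
lemma irreducible_of_irreducible_map' {E F : Type*} [Field E] [Field F] (f : E →+* F)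
    {p : E[X]} (hp : Irreducible (p.map f)) : Irreducible p := by
  have hinj := f.injective
  constructor
  · intro hu
    exact hp.not_isUnit (IsUnit.map (mapRingHom f) hu)
  · intro a b hab
    have : p.map f = a.map f * b.map f := by rw [hab, Polynomial.map_mul]
    rcases hp.isUnit_or_isUnit this with hu | hu
    · left
      rw [Polynomial.isUnit_iff_degree_eq_zero] at hu ⊢
      rwa [degree_map_eq_of_injective hinj] at hu
    · right
      rw [Polynomial.isUnit_iff_degree_eq_zero] at hu ⊢
      rwa [degree_map_eq_of_injective hinj] at hu

set_option maxHeartbeats 1000000 in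
set_option synthInstance.maxHeartbeats 400000 in
theorem stmt5 (k K : Type*) [Field k] [Field K] [Algebra k K]
    (h g : Polynomial k) (hirr : Irreducible h) (θ : K)
    (hroot : Polynomial.aeval θ h = 0)
    (hgirr : Irreducible (g.map (algebraMap k K) - Polynomial.C θ)) :
    Irreducible (h.comp g) ∧
      (h.Separable → (g.map (algebraMap k K) - Polynomial.C θ).Separable →
        (h.comp g).Separable) := by
  -- basic degree facts
  have hgdeg : 0 < g.natDegree := by
    have := hgirr.natDegree_pos
    rwa [natDegree_sub_C, natDegree_map] at this
  have hhdeg : 0 < h.natDegree := hirr.natDegree_pos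
  -- θ is integral over k
  have hθalg : IsAlgebraic k θ := ⟨h, hirr.ne_zero, hroot⟩
  have hθint : IsIntegral k θ := hθalg.isIntegral
  -- the intermediate field E = k(θ)
  let E := k⟮θ⟯
  let θE : E := IntermediateField.AdjoinSimple.gen k θ
  -- the polynomial g - θ over E
  let gE : E[X] := g.map (algebraMap k E) - C θE
  have hgEmap : gE.map (algebraMap E K) = g.map (algebraMap k K) - C θ := by
    rw [Polynomial.map_sub, Polynomial.map_map, map_C,
      IntermediateField.AdjoinSimple.algebraMap_gen, ← IsScalarTower.algebraMap_eq]
  have hgEirr : Irreducible gE :=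
    irreducible_of_irreducible_map' (algebraMap E K) (hgEmap ▸ hgirr)
  have hgEdeg : gE.natDegree = g.natDegree := by
    show (g.map (algebraMap k E) - C θE).natDegree = g.natDegree
    rw [natDegree_sub_C, natDegree_map]
  have hgEne : gE ≠ 0 := hgEirr.ne_zero
  -- the field L = E[x]/(gE)
  haveI : Fact (Irreducible gE) := ⟨hgEirr⟩
  let L := AdjoinRoot gE
  let β : L := AdjoinRoot.root gE
  let θL : L := algebraMap E L θE
  -- evaluation facts
  have hgβ : Polynomial.aeval β g = θL := by
    have h0 : Polynomial.aeval β (g.map (algebraMap k E) - C θE) = 0 := by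
      rw [AdjoinRoot.aeval_eq]; exact AdjoinRoot.mk_self
    rw [map_sub, aeval_C, aeval_map_algebraMap, sub_eq_zero] at h0
    exact h0
  have hθEroot : Polynomial.aeval θE h = 0 := by
    apply (algebraMap E K).injective
    rw [map_zero, ← aeval_algebraMap_apply, IntermediateField.AdjoinSimple.algebraMap_gen]
    exact hroot
  have hβroot : Polynomial.aeval β (h.comp g) = 0 := by
    rw [aeval_comp, hgβ, show θL = algebraMap E L θE from rfl, aeval_algebraMap_apply,
      hθEroot, map_zero]
  -- finite dimensionality
  haveI : FiniteDimensional k E := IntermediateField.adjoin.finiteDimensional hθint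
  haveI : FiniteDimensional E L := (AdjoinRoot.powerBasis hgEne).finite
  haveI : FiniteDimensional k L := FiniteDimensional.trans k E L
  have hfinE : Module.finrank k E = h.natDegree := by
    show Module.finrank k k⟮θ⟯ = h.natDegree
    rw [IntermediateField.adjoin.finrank hθint,
      ← minpoly.eq_of_irreducible hirr hroot, natDegree_mul_C]
    exact inv_ne_zero (leadingCoeff_ne_zero.mpr hirr.ne_zero)
  have hfinL : Module.finrank E L = g.natDegree := by
    rw [(AdjoinRoot.powerBasis hgEne).finrank, AdjoinRoot.powerBasis_dim, hgEdeg]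
  have hfinkL : Module.finrank k L = h.natDegree * g.natDegree := by
    rw [← hfinE, ← hfinL, Module.finrank_mul_finrank k E L]
  -- k(β) = L
  have hadjE : Algebra.adjoin k ({θE} : Set E) = ⊤ := by
    apply Subalgebra.map_injective (f := E.val) (fun a b hab => Subtype.ext hab)
    rw [AlgHom.map_adjoin, Set.image_singleton, Algebra.map_top, E.range_val,
      show E.val θE = θ from IntermediateField.AdjoinSimple.coe_gen k θ,
      ← IntermediateField.adjoin_simple_toSubalgebra_of_isAlgebraic hθint.isAlgebraic]
  have hθLmem : θL ∈ Algebra.adjoin k ({β} : Set L) := by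
    rw [← hgβ]
    exact Polynomial.aeval_mem_adjoin_singleton k β
  have hEmem : ∀ c : E, algebraMap E L c ∈ Algebra.adjoin k ({β} : Set L) := by
    intro c
    have hc : c ∈ Algebra.adjoin k ({θE} : Set E) := hadjE ▸ Algebra.mem_top
    induction hc using Algebra.adjoin_induction with
    | mem x hx =>
        rcases hx with rfl
        exact hθLmem
    | algebraMap r =>
        rw [← IsScalarTower.algebraMap_apply]
        exact Subalgebra.algebraMap_mem _ r
    | add x y hx hy ihx ihy => rw [map_add]; exact add_mem ihx ihy
    | mul x y hx hy ihx ihy => rw [map_mul]; exact mul_mem ihx ihy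
  have haevalmem : ∀ p : E[X], Polynomial.aeval β p ∈ Algebra.adjoin k ({β} : Set L) := by
    intro p
    induction p using Polynomial.induction_on' with
    | add p q hp hq => rw [map_add]; exact add_mem hp hq
    | monomial n a =>
        rw [aeval_monomial]
        exact mul_mem (hEmem a) (pow_mem (Algebra.self_mem_adjoin_singleton k β) n)
  have hadj : Algebra.adjoin k ({β} : Set L) = ⊤ := by
    rw [eq_top_iff]
    rintro x -
    obtain ⟨p, rfl⟩ := AdjoinRoot.mk_surjective x
    rw [← AdjoinRoot.aeval_eq]
    exact haevalmem p
  have hβint : IsIntegral k β := IsIntegral.of_finite k β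
  have hminpoly : (minpoly k β).natDegree = h.natDegree * g.natDegree := by
    rw [← IntermediateField.adjoin.finrank hβint,
      IntermediateField.adjoin_eq_top_of_algebra (F := k) (S := ({β} : Set L)) hadj, IntermediateField.finrank_top', hfinkL]
  -- conclude irreducibility
  have hdvd : minpoly k β ∣ h.comp g := minpoly.dvd k β hβroot
  have hcompdeg : (h.comp g).natDegree = h.natDegree * g.natDegree := natDegree_comp
  have hcompne : h.comp g ≠ 0 := fun hc => by
    rw [hc, natDegree_zero] at hcompdeg
    exact (Nat.mul_pos hhdeg hgdeg).ne' hcompdeg.symm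
  have Hirr : Irreducible (h.comp g) := by
    obtain ⟨c, hc⟩ := hdvd
    have hmne : minpoly k β ≠ 0 := minpoly.ne_zero hβint
    have hcne : c ≠ 0 := fun h0 => hcompne (by rw [hc, h0, mul_zero])
    have hcdeg : c.natDegree = 0 := by
      have h2 := hcompdeg
      rw [hc, natDegree_mul hmne hcne, hminpoly] at h2
      omega
    have hcC := eq_C_of_natDegree_eq_zero hcdeg
    have hc0 : c.coeff 0 ≠ 0 := fun h0 => hcne (by rw [hcC, h0, map_zero])
    have hcunit : IsUnit c := hcC ▸ isUnit_C.mpr (isUnit_iff_ne_zero.mpr hc0)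
    have hassoc : Associated (minpoly k β) (h.comp g) :=
      ⟨hcunit.unit, by rw [IsUnit.unit_spec]; exact hc.symm⟩
    exact hassoc.irreducible (minpoly.irreducible hβint)
  refine ⟨Hirr, fun hhs hgs => ?_⟩
  -- separability
  rw [separable_iff_derivative_ne_zero Hirr]
  have hg' : derivative g ≠ 0 := by
    intro h0
    have hd0 : derivative (g.map (algebraMap k K) - Polynomial.C θ) = 0 := by
      rw [derivative_sub, derivative_C, sub_zero, derivative_map, h0, Polynomial.map_zero]
    rw [Polynomial.Separable, hd0, isCoprime_zero_right] at hgs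
    exact hgirr.not_isUnit hgs
  have hh' : derivative h ≠ 0 := by
    intro h0
    rw [Polynomial.Separable, h0, isCoprime_zero_right] at hhs
    exact hirr.not_isUnit hhs
  rw [derivative_comp]
  refine mul_ne_zero hg' ?_
  intro h0
  rcases comp_eq_zero_iff.mp h0 with h1 | h1
  · exact hh' h1
  · rw [h1.2, natDegree_C] at hgdeg
    exact absurd hgdeg (lt_irrefl 0)
end

section
/- Let 𝒪 be the valuation ring of a nonarchimedean local field with maximal ideal 𝔭 and residue field of size q, let e ≥ 1, and let a_1, …, a_m ∈ 𝒪 (with m = q^e) be a complete set of representatives for 𝒪/𝔭^e. For each i define h_i(x) = ∏_{j ≠ i} (x − a_j)/(a_i − a_j). Then: (1) if b ∈ a_i + 𝔭^e, then h_i(b) ∈ 1 + 𝔭; and (2) if b ∈ a_ℓ + 𝔭^e for some ℓ ≠ i, then h_i(b) ∈ 𝔭. -/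
section Aux

variable {𝒪 : Type*} [CommRing 𝒪] [IsDomain 𝒪] [IsDiscreteValuationRing 𝒪]

lemma aux_div19 {e : ℕ} {x y : 𝒪} (hy : y ∉ (IsLocalRing.maximalIdeal 𝒪) ^ e)
    (hx : x ∈ (IsLocalRing.maximalIdeal 𝒪) ^ e) :
    ∃ t ∈ IsLocalRing.maximalIdeal 𝒪, x = y * t := by
  obtain ⟨ϖ, hϖ⟩ := IsDiscreteValuationRing.exists_irreducible 𝒪
  have hspan := hϖ.maximalIdeal_eq
  have hmem : ∀ z : 𝒪, z ∈ (IsLocalRing.maximalIdeal 𝒪) ^ e ↔ ϖ ^ e ∣ z := by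
    intro z
    rw [hspan, Ideal.span_singleton_pow, Ideal.mem_span_singleton]
  have hy0 : y ≠ 0 := by rintro rfl; exact hy (zero_mem _)
  obtain ⟨k, u, rfl⟩ := IsDiscreteValuationRing.eq_unit_mul_pow_irreducible hy0 hϖ
  have hk : k < e := by
    by_contra h
    push_neg at h
    exact hy ((hmem _).2 ((pow_dvd_pow ϖ h).mul_left _))
  obtain ⟨s, hs⟩ := (hmem x).1 hx
  refine ⟨(↑u⁻¹ : 𝒪) * (ϖ ^ (e - k) * s), ?_, ?_⟩
  · rw [hspan, Ideal.mem_span_singleton]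
    exact ((dvd_pow_self ϖ (by omega : e - k ≠ 0)).mul_right s).mul_left _
  · have he' : ϖ ^ k * ϖ ^ (e - k) = ϖ ^ e := by
      rw [← pow_add]; congr 1; omega
    calc x = ϖ ^ e * s := hs
      _ = ((↑u * ↑u⁻¹) * (ϖ ^ k * ϖ ^ (e - k))) * s := by
          rw [Units.mul_inv, he', one_mul]
      _ = (↑u * ϖ ^ k) * ((↑u⁻¹ : 𝒪) * (ϖ ^ (e - k) * s)) := by ring

lemma aux_unit19 {e : ℕ} {x y : 𝒪} (hy : y ∉ (IsLocalRing.maximalIdeal 𝒪) ^ e)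
    (h : x - y ∈ (IsLocalRing.maximalIdeal 𝒪) ^ e) :
    ∃ u : 𝒪, IsUnit u ∧ u - 1 ∈ IsLocalRing.maximalIdeal 𝒪 ∧ x = y * u := by
  obtain ⟨t, ht, hxy⟩ := aux_div19 hy h
  refine ⟨1 + t, ?_, by simpa using ht, by rw [mul_add, mul_one, ← hxy]; ring⟩
  by_contra hu
  have h1 : (1 : 𝒪) + t ∈ IsLocalRing.maximalIdeal 𝒪 :=
    (IsLocalRing.mem_maximalIdeal _).2 (mem_nonunits_iff.2 hu)
  have : (1 : 𝒪) ∈ IsLocalRing.maximalIdeal 𝒪 := by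
    have := Ideal.sub_mem _ h1 ht
    simpa using this
  exact (IsLocalRing.maximalIdeal.isMaximal 𝒪).ne_top ((Ideal.eq_top_iff_one _).2 this)

end Aux

theorem stmt19 (𝒪 : Type*) [CommRing 𝒪] [IsDomain 𝒪] [IsDiscreteValuationRing 𝒪]
    (m e : ℕ) (he : 1 ≤ e) (a : Fin m → 𝒪)
    (ha : Function.Bijective fun i : Fin m =>
      Ideal.Quotient.mk ((IsLocalRing.maximalIdeal 𝒪) ^ e) (a i))
    (i : Fin m) (b : 𝒪) :
    (b - a i ∈ (IsLocalRing.maximalIdeal 𝒪) ^ e →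
      ∃ c : 𝒪, c - 1 ∈ IsLocalRing.maximalIdeal 𝒪 ∧
        ∏ j ∈ Finset.univ.erase i, (b - a j)
          = c * ∏ j ∈ Finset.univ.erase i, (a i - a j)) ∧
    (∀ l : Fin m, l ≠ i → b - a l ∈ (IsLocalRing.maximalIdeal 𝒪) ^ e →
      ∃ c ∈ IsLocalRing.maximalIdeal 𝒪,
        ∏ j ∈ Finset.univ.erase i, (b - a j)
          = c * ∏ j ∈ Finset.univ.erase i, (a i - a j)) := by
  classical
  set 𝔭 := IsLocalRing.maximalIdeal 𝒪 with h𝔭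
  -- differences of distinct representatives are not in 𝔭^e
  have hne : ∀ p q : Fin m, p ≠ q → a p - a q ∉ 𝔭 ^ e := by
    intro p q hpq hmem
    exact hpq (ha.1 ((Ideal.Quotient.mk_eq_mk_iff_sub_mem (a p) (a q)).2 hmem))
  constructor
  · -- part 1
    intro hb
    have H : ∀ j : Fin m, ∃ u : 𝒪, IsUnit u ∧ u - 1 ∈ 𝔭 ∧
        (j ≠ i → b - a j = (a i - a j) * u) := by
      intro j
      by_cases hji : j = i
      · exact ⟨1, isUnit_one, by simp, fun h => absurd hji h⟩
      · obtain ⟨u, hu1, hu2, hu3⟩ := aux_unit19 (hne i j (fun h => hji h.symm))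
          (by have : (b - a j) - (a i - a j) = b - a i := by ring
              rw [this]; exact hb)
        exact ⟨u, hu1, hu2, fun _ => hu3⟩
    choose u hu1 hu2 hu3 using H
    refine ⟨∏ j ∈ Finset.univ.erase i, u j, ?_, ?_⟩
    · refine (Ideal.Quotient.mk_eq_mk_iff_sub_mem _ _).1 ?_
      rw [map_prod, map_one]
      apply Finset.prod_eq_one
      intro j _
      have := (Ideal.Quotient.mk_eq_mk_iff_sub_mem (u j) 1).2 (hu2 j)
      simpa using this
    · rw [Finset.prod_congr rfl (fun j hj => hu3 j (Finset.mem_erase.1 hj).1),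
        Finset.prod_mul_distrib, mul_comm]
  · -- part 2
    intro l hl hbl
    have hli : a l - a i ∉ 𝔭 ^ e := hne l i hl
    -- the reindexing bijection σ
    let E : Fin m ≃ (𝒪 ⧸ 𝔭 ^ e) := Equiv.ofBijective _ ha
    let σ : Fin m ≃ Fin m := E.trans ((Equiv.addRight (E i - E l)).trans E.symm)
    have hE : ∀ j, E j = Ideal.Quotient.mk (𝔭 ^ e) (a j) := fun j => rfl
    have hEσ : ∀ j, E (σ j) = E j + (E i - E l) := by
      intro j; simp [σ, Equiv.addRight]
    have hσl : σ l = i := by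
      apply E.injective
      rw [hEσ]; ring
    have hσ : ∀ j : Fin m, a i - a (σ j) - (a l - a j) ∈ 𝔭 ^ e := by
      intro j
      have h1 : Ideal.Quotient.mk (𝔭 ^ e) (a (σ j)) =
          Ideal.Quotient.mk (𝔭 ^ e) (a j + a i - a l) := by
        have h0 := hEσ j
        simp only [hE] at h0
        rw [h0, map_sub, map_add]; ring
      have h2 : a (σ j) - (a j + a i - a l) ∈ 𝔭 ^ e :=
        (Ideal.Quotient.mk_eq_mk_iff_sub_mem _ _).1 h1
      have := neg_mem h2
      have heq : -(a (σ j) - (a j + a i - a l)) = a i - a (σ j) - (a l - a j) := by ring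
      rwa [heq] at this
    -- units w j with a i - a (σ j) = (a l - a j) * w j for j ≠ l
    have HW : ∀ j : Fin m, ∃ w : 𝒪, IsUnit w ∧
        (j ≠ l → a i - a (σ j) = (a l - a j) * w) := by
      intro j
      by_cases hjl : j = l
      · exact ⟨1, isUnit_one, fun h => absurd hjl h⟩
      · obtain ⟨w, hw1, _, hw3⟩ := aux_unit19 (hne l j (fun h => hjl h.symm)) (hσ j)
        exact ⟨w, hw1, fun _ => hw3⟩
    choose w hw1 hw2 using HW
    -- units u j with b - a j = (a l - a j) * u j for j ≠ l
    have HU : ∀ j : Fin m, ∃ u : 𝒪, (j ≠ l → b - a j = (a l - a j) * u) := by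
      intro j
      by_cases hjl : j = l
      · exact ⟨1, fun h => absurd hjl h⟩
      · obtain ⟨v, _, _, hv3⟩ := aux_unit19 (hne l j (fun h => hjl h.symm))
          (by have : (b - a j) - (a l - a j) = b - a l := by ring
              rw [this]; exact hbl)
        exact ⟨v, fun _ => hv3⟩
    choose u hu using HU
    -- t with b - a l = (a l - a i) * t, t ∈ 𝔭
    obtain ⟨t, ht, htl⟩ := aux_div19 hli hbl
    set S := (Finset.univ.erase i).erase l with hS
    have hlei : l ∈ Finset.univ.erase i := Finset.mem_erase.2 ⟨hl, Finset.mem_univ l⟩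
    have hiel : i ∈ Finset.univ.erase l := Finset.mem_erase.2 ⟨fun h => hl h.symm, Finset.mem_univ i⟩
    set P := ∏ j ∈ S, (a l - a j) with hP
    set U := ∏ j ∈ S, u j with hUdef
    set W := ∏ j ∈ S, w j with hWdef
    -- LHS
    have hLHS : ∏ j ∈ Finset.univ.erase i, (b - a j) = (a l - a i) * t * (P * U) := by
      rw [← Finset.mul_prod_erase _ _ hlei, htl, ← hS]
      congr 1
      rw [Finset.prod_congr rfl (fun j hj => hu j (Finset.mem_erase.1 hj).1),
        Finset.prod_mul_distrib]
    -- RHS via reindexing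
    have hRHS : ∏ j ∈ Finset.univ.erase i, (a i - a j)
        = (a l - a i) * w i * (P * W) := by
      have hre : ∏ j ∈ Finset.univ.erase i, (a i - a j)
          = ∏ j ∈ Finset.univ.erase l, (a i - a (σ j)) := by
        refine (Finset.prod_equiv σ ?_ ?_).symm
        · intro j
          simp only [Finset.mem_erase, Finset.mem_univ, and_true]
          constructor
          · intro hjl hji
            exact hjl (σ.injective (by rw [hji, hσl]))
          · intro hji hjl
            exact hji (by rw [hjl, hσl])
        · intro j _; rfl
      rw [hre, ← Finset.mul_prod_erase _ _ hiel, Finset.erase_right_comm, ← hS,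
        hw2 i (fun h => hl h.symm)]
      congr 1
      rw [Finset.prod_congr rfl (fun j hj => hw2 j (Finset.mem_erase.1 (by
        rwa [hS] at hj)).1), Finset.prod_mul_distrib]
    -- the unit w i * W and its inverse
    have hWu : IsUnit (w i * W) := by
      refine (hw1 i).mul ?_
      exact Finset.prod_induction _ IsUnit (fun _ _ => IsUnit.mul) isUnit_one
        (fun j _ => hw1 j)
    obtain ⟨V, hV⟩ := hWu.exists_right_inv
    refine ⟨t * U * V, Ideal.mul_mem_right _ _ (Ideal.mul_mem_right _ _ ht), ?_⟩
    rw [hLHS, hRHS]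
    linear_combination (-(a l - a i) * t * P * U) * hV
end
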